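/- For all integers i, j ≥ 1 with i ≡ 2 (mod 3) and j ≡ 2 (mod 3), the number m(j,i) - (2j+i+8)³ is a sum of four positive cubes, namely (j+3)³ + (2j+7)³ + 2(2j+i+8)³. -/
import Mathlib


/-- The k-th triangular number, with p(k)=0 for k ≤ 0. -/
def triZ (k : ℤ) : ℤ := if k ≤ 0 then 0 else k * (k + 1) / 2

/-- The k-th tetrahedral number, with ρ(k)=0 for k ≤ 0. -/
def tetZ (k : ℤ) : ℤ := if k ≤ 0 then 0 else k * (k + 1) * (k + 2) / 6

/-- m(j,i) from the paper. -/
def mJI (j i : ℤ) : ℤ :=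
  508 + 891 * (j + 1) + 690 * triZ j + (507 + 306 * j + 72 * triZ (j - 1)) * (i + 1)
    + (144 + 36 * j) * triZ i + 18 * tetZ (i - 1) + 198 * tetZ (j - 1)

/-- n(j,i) from the paper. -/
def nJI (j i : ℤ) : ℤ :=
  4068 + 4193 * (j - 1) + 1167 * (j - 2) * (j - 1) + 89 * (j - 3) * (j - 2) * (j - 1)
    + (397 + 150 * (j - 1) + 12 * (j - 2) * (j - 1)) * (i - 1)
    + 6 * (5 + j) * (i - 2) * (i - 1) + (i - 3) * (i - 2) * (i - 1)

lemma triZ_eq (k : ℤ) (hk : 0 ≤ k) : 2 * triZ k = k * (k + 1) := by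
  unfold triZ
  rcases eq_or_lt_of_le hk with h | h
  · simp [← h]
  · rw [if_neg (by omega)]
    exact Int.mul_ediv_cancel' (Int.even_mul_succ_self k).two_dvd

lemma tetZ_eq (k : ℤ) (hk : 0 ≤ k) : 6 * tetZ k = k * (k + 1) * (k + 2) := by
  unfold tetZ
  rcases eq_or_lt_of_le hk with h | h
  · simp [← h]
  · rw [if_neg (by omega)]
    refine Int.mul_ediv_cancel' ?_
    have h2 : (2 : ℤ) ∣ k * (k + 1) * (k + 2) :=
      Dvd.dvd.mul_right (Int.even_mul_succ_self k).two_dvd _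
    have h3 : (3 : ℤ) ∣ k * (k + 1) * (k + 2) := by
      have hk3 : k % 3 = 0 ∨ k % 3 = 1 ∨ k % 3 = 2 := by omega
      rcases hk3 with h|h|h
      · exact Dvd.dvd.mul_right (Dvd.dvd.mul_right ⟨k / 3, by omega⟩ _) _
      · exact Dvd.dvd.mul_left ⟨(k + 2) / 3, by omega⟩ _
      · exact Dvd.dvd.mul_right (Dvd.dvd.mul_left ⟨(k + 1) / 3, by omega⟩ _) _
    exact (by norm_num : (6:ℤ) = 2*3) ▸
      (IsCoprime.mul_dvd (by norm_num) h2 h3)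

theorem stmt10 (i j : ℤ) (hi : 1 ≤ i) (hj : 1 ≤ j)
    (hi3 : i ≡ 2 [ZMOD 3]) (hj3 : j ≡ 2 [ZMOD 3]) :
    mJI j i - (2 * j + i + 8) ^ 3 =
      (j + 3) ^ 3 + (2 * j + 7) ^ 3 + 2 * (2 * j + i + 8) ^ 3 ∧
    0 < j + 3 ∧ 0 < 2 * j + 7 ∧ 0 < 2 * j + i + 8 := by
  have htj := triZ_eq j (by omega)
  have htj1 := triZ_eq (j - 1) (by omega)
  have hti := triZ_eq i (by omega)
  have hti1 := tetZ_eq (i - 1) (by omega)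
  have htj1' := tetZ_eq (j - 1) (by omega)
  refine ⟨?_, by omega, by omega, by omega⟩
  unfold mJI
  linear_combination 345 * htj + 36 * (i + 1) * htj1 + (72 + 18 * j) * hti
    + 3 * hti1 + 33 * htj1'
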